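/- arXiv:1005.5155 — 8 statements merged into one kernel-verified Lean document; each statement's English description precedes it below -/
import Mathlib

section
/- Let v be a valuation on a distributive lattice L. Then w(f,g) := v(f) − v(f∧g) satisfies the cut law: w(f,g) = w(f, g∨h) + w(f∧h, g) for all f,g,h ∈ L. -/
theorem valuation_cut_law {L : Type*} [DistribLattice L] (v : L → ℝ)
    (hmod : ∀ f g : L, v f + v g = v (f ⊓ g) + v (f ⊔ g)) :
    ∀ f g h : L, v f - v (f ⊓ g) =
      (v f - v (f ⊓ (g ⊔ h))) + (v (f ⊓ h) - v ((f ⊓ h) ⊓ g)) := by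
  intro f g h
  have key := hmod (f ⊓ g) (f ⊓ h)
  have h1 : (f ⊓ g) ⊓ (f ⊓ h) = (f ⊓ h) ⊓ g := by
    rw [inf_comm f h]
    ac_rfl
  have h2 : (f ⊓ g) ⊔ (f ⊓ h) = f ⊓ (g ⊔ h) := (inf_sup_left f g h).symm
  rw [h1, h2] at key
  linarith
end

section
/- Let L be a distributive lattice with positive valuation metric d_v (from a positive valuation v). Then p ∈ L is d_v-irreducible if and only if min(d_v(p,f), d_v(p,g)) ≤ d_v(p, f∨g) holds for all f,g strictly below p; and in that case equality min(d_v(p,f), d_v(p,g)) = d_v(p, f∨g) holds for all f,g < p. -/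
theorem dIrreducible_iff_on_strictly_lower {L : Type*} [DistribLattice L]
    (v : L → ℝ)
    (hmod : ∀ f g : L, v f + v g = v (f ⊓ g) + v (f ⊔ g))
    (hpos : ∀ f g : L, f < g → v f < v g) (p : L) :
    ((∀ f g : L, min (v (p ⊔ f) - v (p ⊓ f)) (v (p ⊔ g) - v (p ⊓ g)) ≤
        v (p ⊔ (f ⊔ g)) - v (p ⊓ (f ⊔ g))) ↔
      (∀ f g : L, f < p → g < p →
        min (v (p ⊔ f) - v (p ⊓ f)) (v (p ⊔ g) - v (p ⊓ g)) ≤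
          v (p ⊔ (f ⊔ g)) - v (p ⊓ (f ⊔ g)))) ∧
    ((∀ f g : L, min (v (p ⊔ f) - v (p ⊓ f)) (v (p ⊔ g) - v (p ⊓ g)) ≤
        v (p ⊔ (f ⊔ g)) - v (p ⊓ (f ⊔ g))) →
      ∀ f g : L, f < p → g < p →
        min (v (p ⊔ f) - v (p ⊓ f)) (v (p ⊔ g) - v (p ⊓ g)) =
          v (p ⊔ (f ⊔ g)) - v (p ⊓ (f ⊔ g))) := by
  have hmono : ∀ a b : L, a ≤ b → v a ≤ v b := fun a b hab =>
    hab.lt_or_eq.elim (fun h => (hpos a b h).le) (fun h => by rw [h])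
  constructor
  · constructor
    · intro h f g _ _
      exact h f g
    · intro h f g
      have hdist : p ⊓ (f ⊔ g) = (p ⊓ f) ⊔ (p ⊓ g) := inf_sup_left p f g
      have h1 : v (p ⊔ f) ≤ v (p ⊔ (f ⊔ g)) :=
        hmono _ _ (sup_le_sup_left le_sup_left p)
      have h2 : v (p ⊔ g) ≤ v (p ⊔ (f ⊔ g)) :=
        hmono _ _ (sup_le_sup_left le_sup_right p)
      rcases lt_or_eq_of_le (inf_le_left : p ⊓ f ≤ p) with hf | hf
      · rcases lt_or_eq_of_le (inf_le_left : p ⊓ g ≤ p) with hg | hg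
        · have key := h (p ⊓ f) (p ⊓ g) hf hg
          have e1 : p ⊔ (p ⊓ f) = p := sup_inf_self
          have e2 : p ⊔ (p ⊓ g) = p := sup_inf_self
          have e3 : p ⊓ (p ⊓ f) = p ⊓ f := inf_eq_right.mpr inf_le_left
          have e4 : p ⊓ (p ⊓ g) = p ⊓ g := inf_eq_right.mpr inf_le_left
          have e5 : p ⊔ ((p ⊓ f) ⊔ (p ⊓ g)) = p :=
            sup_eq_left.mpr (sup_le inf_le_left inf_le_left)
          have e6 : p ⊓ ((p ⊓ f) ⊔ (p ⊓ g)) = (p ⊓ f) ⊔ (p ⊓ g) :=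
            inf_eq_right.mpr (sup_le inf_le_left inf_le_left)
          rw [e1, e2, e3, e4, e5, e6] at key
          rcases min_le_iff.mp key with hk | hk
          · have := min_le_left (v (p ⊔ f) - v (p ⊓ f)) (v (p ⊔ g) - v (p ⊓ g))
            rw [hdist]; linarith
          · have := min_le_right (v (p ⊔ f) - v (p ⊓ f)) (v (p ⊔ g) - v (p ⊓ g))
            rw [hdist]; linarith
        · -- p ≤ g
          have h3 : v (p ⊓ (f ⊔ g)) ≤ v p := hmono _ _ inf_le_left
          have hv : v (p ⊓ g) = v p := by rw [hg]
          have := min_le_right (v (p ⊔ f) - v (p ⊓ f)) (v (p ⊔ g) - v (p ⊓ g))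
          linarith
      · -- p ≤ f
        have h3 : v (p ⊓ (f ⊔ g)) ≤ v p := hmono _ _ inf_le_left
        have hv : v (p ⊓ f) = v p := by rw [hf]
        have := min_le_left (v (p ⊔ f) - v (p ⊓ f)) (v (p ⊔ g) - v (p ⊓ g))
        linarith
  · intro h f g hf hg
    have ef1 : p ⊔ f = p := sup_eq_left.mpr hf.le
    have ef2 : p ⊓ f = f := inf_eq_right.mpr hf.le
    have eg1 : p ⊔ g = p := sup_eq_left.mpr hg.le
    have eg2 : p ⊓ g = g := inf_eq_right.mpr hg.le
    have es1 : p ⊔ (f ⊔ g) = p := sup_eq_left.mpr (sup_le hf.le hg.le)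
    have es2 : p ⊓ (f ⊔ g) = f ⊔ g := inf_eq_right.mpr (sup_le hf.le hg.le)
    have key := h f g
    rw [ef1, ef2, eg1, eg2, es1, es2] at key ⊢
    have h1 : v f ≤ v (f ⊔ g) := hmono _ _ le_sup_left
    have h2 : v g ≤ v (f ⊔ g) := hmono _ _ le_sup_right
    rcases min_le_iff.mp key with hk | hk
    · have : min (v p - v f) (v p - v g) ≤ v p - v f := min_le_left _ _
      have hmin : min (v p - v f) (v p - v g) = v p - v f := by
        rcases le_total (v f) (v g) with hh | hh
        · -- v f ≤ v g but v p - v f ≤ v p - v(f⊔g) ≤ v p - v g, so v g ≤ v f too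
          have : v (f ⊔ g) ≤ v f := by linarith
          have : v g ≤ v f := le_trans h2 this
          rw [min_eq_left]; linarith
        · rw [min_eq_left]; linarith
      rw [hmin]
      have : v (f ⊔ g) ≤ v f := by linarith
      linarith
    · have hmin : min (v p - v f) (v p - v g) = v p - v g := by
        rcases le_total (v g) (v f) with hh | hh
        · have : v (f ⊔ g) ≤ v g := by linarith
          have : v f ≤ v g := le_trans h1 this
          rw [min_eq_right]; linarith
        · rw [min_eq_right]; linarith
      rw [hmin]
      have : v (f ⊔ g) ≤ v g := by linarith
      linarith
end

section
/- Let L be a distributive lattice with a positive valuation v and induced metric d_v(f,g) = v(f∨g) − v(f∧g). An element p ∈ L is d_v-irreducible if and only if its strictly lower set {f ∈ L : f < p} is totally ordered. -/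
theorem dIrreducible_iff_lower_set_totally_ordered {L : Type*} [DistribLattice L]
    (v : L → ℝ)
    (hmod : ∀ f g : L, v f + v g = v (f ⊓ g) + v (f ⊔ g))
    (hpos : ∀ f g : L, f < g → v f < v g) (p : L) :
    (∀ f g : L, min (v (p ⊔ f) - v (p ⊓ f)) (v (p ⊔ g) - v (p ⊓ g)) ≤
        v (p ⊔ (f ⊔ g)) - v (p ⊓ (f ⊔ g))) ↔
    (∀ f g : L, f < p → g < p → f ≤ g ∨ g ≤ f) := by
  have hmono : ∀ x y : L, x ≤ y → v x ≤ v y := by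
    intro x y h
    rcases h.lt_or_eq with h' | h'
    · exact (hpos _ _ h').le
    · rw [h']
  constructor
  · intro hirr f g hf hg
    by_contra hco
    push_neg at hco
    obtain ⟨h1, h2⟩ := hco
    have hfp : p ⊔ f = p := sup_eq_left.2 hf.le
    have hgp : p ⊔ g = p := sup_eq_left.2 hg.le
    have hfg : f ⊔ g ≤ p := sup_le hf.le hg.le
    have h3 : p ⊔ (f ⊔ g) = p := sup_eq_left.2 hfg
    have h4 : p ⊓ (f ⊔ g) = f ⊔ g := inf_eq_right.2 hfg
    have h5 : p ⊓ f = f := inf_eq_right.2 hf.le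
    have h6 : p ⊓ g = g := inf_eq_right.2 hg.le
    have hmin := hirr f g
    rw [hfp, hgp, h3, h4, h5, h6] at hmin
    have hflt : f < f ⊔ g := left_lt_sup.2 h2
    have hglt : g < f ⊔ g := right_lt_sup.2 h1
    have hv1 := hpos _ _ hflt
    have hv2 := hpos _ _ hglt
    exact absurd hmin (not_le.2 (lt_min (sub_lt_sub_left hv1 (v p)) (sub_lt_sub_left hv2 (v p))))
  · intro htot f g
    have hd : p ⊓ (f ⊔ g) = (p ⊓ f) ⊔ (p ⊓ g) := inf_sup_left p f g
    have hcomp : p ⊓ f ≤ p ⊓ g ∨ p ⊓ g ≤ p ⊓ f := by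
      rcases eq_or_lt_of_le (inf_le_left : p ⊓ f ≤ p) with ha | ha
      · right; rw [ha]; exact inf_le_left
      · rcases eq_or_lt_of_le (inf_le_left : p ⊓ g ≤ p) with hb | hb
        · left; rw [hb]; exact inf_le_left
        · exact htot _ _ ha hb
    rcases hcomp with h | h
    · have h1 : p ⊓ (f ⊔ g) = p ⊓ g := by rw [hd, sup_eq_right.2 h]
      have h2 : v (p ⊔ g) ≤ v (p ⊔ (f ⊔ g)) :=
        hmono _ _ (sup_le_sup_left le_sup_right p)
      calc min (v (p ⊔ f) - v (p ⊓ f)) (v (p ⊔ g) - v (p ⊓ g))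
          ≤ v (p ⊔ g) - v (p ⊓ g) := min_le_right _ _
        _ ≤ v (p ⊔ (f ⊔ g)) - v (p ⊓ (f ⊔ g)) := by rw [h1]; linarith
    · have h1 : p ⊓ (f ⊔ g) = p ⊓ f := by rw [hd, sup_eq_left.2 h]
      have h2 : v (p ⊔ f) ≤ v (p ⊔ (f ⊔ g)) :=
        hmono _ _ (sup_le_sup_left le_sup_left p)
      calc min (v (p ⊔ f) - v (p ⊓ f)) (v (p ⊔ g) - v (p ⊓ g))
          ≤ v (p ⊔ f) - v (p ⊓ f) := min_le_left _ _
        _ ≤ v (p ⊔ (f ⊔ g)) - v (p ⊓ (f ⊔ g)) := by rw [h1]; linarith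
end

section
/- In the lattice of positive natural numbers under gcd and lcm with valuation v = log, an element p > 1 is d_v-irreducible if and only if p is a prime power. -/
private def D (p n : ℕ) : ℕ := Nat.lcm p n / Nat.gcd p n

private lemma gcd_dvd_lcm' (p n : ℕ) : Nat.gcd p n ∣ Nat.lcm p n :=
  (Nat.gcd_dvd_left p n).trans (Nat.dvd_lcm_left p n)

private lemma D_pos (p n : ℕ) (hp : 0 < p) (hn : 0 < n) : 0 < D p n := by
  have hl : 0 < Nat.lcm p n := Nat.pos_of_ne_zero (Nat.lcm_ne_zero hp.ne' hn.ne')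
  exact Nat.div_pos (Nat.le_of_dvd hl (gcd_dvd_lcm' p n)) (Nat.gcd_pos_of_pos_left n hp)

private lemma log_D (p n : ℕ) (hp : 0 < p) (hn : 0 < n) :
    Real.log (Nat.lcm p n) - Real.log (Nat.gcd p n) = Real.log (D p n) := by
  have h : D p n * Nat.gcd p n = Nat.lcm p n := Nat.div_mul_cancel (gcd_dvd_lcm' p n)
  have hg : (0:ℝ) < (Nat.gcd p n : ℝ) := by
    exact_mod_cast Nat.gcd_pos_of_pos_left n hp
  have hD : (0:ℝ) < (D p n : ℝ) := by exact_mod_cast D_pos p n hp hn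
  rw [← h]
  push_cast
  rw [Real.log_mul hD.ne' hg.ne']
  ring

private lemma fact_D (p n : ℕ) (hp : p ≠ 0) (hn : n ≠ 0) (r : ℕ) :
    (D p n).factorization r =
      max (p.factorization r) (n.factorization r) -
        min (p.factorization r) (n.factorization r) := by
  have hl : Nat.lcm p n ≠ 0 := Nat.lcm_ne_zero hp hn
  have := Nat.factorization_div (gcd_dvd_lcm' p n)
  rw [show D p n = Nat.lcm p n / Nat.gcd p n from rfl, this,
    Nat.factorization_lcm hp hn, Nat.factorization_gcd hp hn]
  simp [Finsupp.tsub_apply]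

private lemma key (q k : ℕ) (hq : q.Prime) (hk : 0 < k) (f g : ℕ) (hf : f ≠ 0) (hg : g ≠ 0)
    (hfg : g.factorization q ≤ f.factorization q) :
    D (q ^ k) f ∣ D (q ^ k) (Nat.lcm f g) := by
  have hpk : q ^ k ≠ 0 := pow_ne_zero _ hq.pos.ne'
  have hl : Nat.lcm f g ≠ 0 := Nat.lcm_ne_zero hf hg
  rw [← Nat.factorization_le_iff_dvd (D_pos _ _ (Nat.pos_of_ne_zero hpk) (Nat.pos_of_ne_zero hf)).ne'
      (D_pos _ _ (Nat.pos_of_ne_zero hpk) (Nat.pos_of_ne_zero hl)).ne']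
  intro r
  rw [fact_D _ _ hpk hf, fact_D _ _ hpk hl]
  have hlf : (Nat.lcm f g).factorization r = max (f.factorization r) (g.factorization r) := by
    rw [Nat.factorization_lcm hf hg]; rfl
  rw [hlf]
  rcases eq_or_ne r q with rfl | hr
  · have : max (f.factorization r) (g.factorization r) = f.factorization r :=
      max_eq_left hfg
    rw [this]
  · have hpr : (q ^ k).factorization r = 0 := by
      rw [Nat.Prime.factorization_pow hq]
      simp [Finsupp.single_apply, (Ne.symm hr)]
    rw [hpr]
    simp only [Nat.zero_le, max_eq_right, min_eq_left, Nat.sub_zero]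
    exact le_max_left _ _

theorem gcd_lcm_dIrreducible_iff_isPrimePow (p : ℕ) (hp : 1 < p) :
    (∀ f g : ℕ, 0 < f → 0 < g →
      min (Real.log (Nat.lcm p f) - Real.log (Nat.gcd p f))
          (Real.log (Nat.lcm p g) - Real.log (Nat.gcd p g)) ≤
        Real.log (Nat.lcm p (Nat.lcm f g)) - Real.log (Nat.gcd p (Nat.lcm f g))) ↔
    IsPrimePow p := by
  have hp0 : 0 < p := Nat.lt_of_lt_of_le Nat.zero_lt_one hp.le
  constructor
  · intro H
    by_contra hnp
    -- p is not a prime power; split p = ord_proj * ord_compl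
    set q := p.minFac with hq
    have hqp : q.Prime := Nat.minFac_prime hp.ne'
    set f := ordProj[q] p with hfdef
    set g := ordCompl[q] p with hgdef
    have hqd : q ∣ p := Nat.minFac_dvd p
    have hf1 : 1 < f := by
      apply Nat.one_lt_pow
      · simpa [Nat.Prime.factorization_pos_of_dvd hqp hp0.ne' hqd] using
          (Nat.Prime.factorization_pos_of_dvd hqp hp0.ne' hqd).ne'
      · exact hqp.one_lt
    have hfd : f ∣ p := Nat.ordProj_dvd p q
    have hfg : f * g = p := Nat.ordProj_mul_ordCompl_eq_self p q
    have hg1 : 1 < g := by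
      rcases Nat.lt_or_ge 1 g with h | h
      · exact h
      · exfalso
        interval_cases g
        · simp at hfg; omega
        · apply hnp
          rw [mul_one] at hfg
          exact ⟨q, p.factorization q, hqp.prime,
            Nat.Prime.factorization_pos_of_dvd hqp hp0.ne' hqd, hfg⟩
    have hgd : g ∣ p := Nat.ordCompl_dvd p q
    have hflt : f < p := by
      rcases hfd with ⟨c, hc⟩
      nlinarith [hfg, hf1, hg1]
    have hglt : g < p := by nlinarith [hfg, hf1, hg1]
    have hcop : Nat.Coprime f g := (Nat.coprime_ordCompl hqp hp0.ne').pow_left _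
    have hlcm : Nat.lcm f g = p := by
      rw [Nat.Coprime.lcm_eq_mul hcop, hfg]
    have hspec := H f g (by omega) (by omega)
    rw [hlcm] at hspec
    have hlp : Nat.lcm p p = p := Nat.lcm_self p
    have hgp : Nat.gcd p p = p := Nat.gcd_self p
    rw [hlp, hgp, sub_self] at hspec
    have hlf : Nat.lcm p f = p := Nat.dvd_antisymm (Nat.lcm_dvd dvd_rfl hfd) (Nat.dvd_lcm_left p f)
    have hgf : Nat.gcd p f = f := Nat.gcd_eq_right hfd
    have hlg : Nat.lcm p g = p := Nat.dvd_antisymm (Nat.lcm_dvd dvd_rfl hgd) (Nat.dvd_lcm_left p g)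
    have hgg : Nat.gcd p g = g := Nat.gcd_eq_right hgd
    rw [hlf, hgf, hlg, hgg] at hspec
    have h1 : Real.log f < Real.log p := by
      apply Real.log_lt_log (by exact_mod_cast Nat.lt_of_lt_of_le Nat.zero_lt_one hf1.le)
      exact_mod_cast hflt
    have h2 : Real.log g < Real.log p := by
      apply Real.log_lt_log (by exact_mod_cast Nat.lt_of_lt_of_le Nat.zero_lt_one hg1.le)
      exact_mod_cast hglt
    rcases min_le_iff.mp hspec with h | h <;> linarith
  · rintro ⟨q, k, hqp, hk, rfl⟩
    intro f g hf hg
    have hqp' : q.Prime := hqp.nat_prime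
    have hpk0 : 0 < q ^ k := pow_pos hqp'.pos k
    have hl0 : 0 < Nat.lcm f g := Nat.pos_of_ne_zero (Nat.lcm_ne_zero hf.ne' hg.ne')
    rw [log_D _ _ hpk0 hf, log_D _ _ hpk0 hg, log_D _ _ hpk0 hl0]
    rcases le_total (g.factorization q) (f.factorization q) with h | h
    · have hd := key q k hqp' hk f g hf.ne' hg.ne' h
      have : (D (q ^ k) f : ℝ) ≤ (D (q ^ k) (Nat.lcm f g) : ℝ) := by
        exact_mod_cast Nat.le_of_dvd (D_pos _ _ hpk0 hl0) hd
      calc min (Real.log (D (q ^ k) f)) (Real.log (D (q ^ k) g)) ≤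
            Real.log (D (q ^ k) f) := min_le_left _ _
        _ ≤ _ := Real.log_le_log (by exact_mod_cast D_pos _ _ hpk0 hf) this
    · have hd := key q k hqp' hk g f hg.ne' hf.ne' h
      rw [Nat.lcm_comm f g]
      have : (D (q ^ k) g : ℝ) ≤ (D (q ^ k) (Nat.lcm g f) : ℝ) := by
        exact_mod_cast Nat.le_of_dvd (D_pos _ _ hpk0 (by rwa [Nat.lcm_comm])) hd
      calc min (Real.log (D (q ^ k) f)) (Real.log (D (q ^ k) g)) ≤
            Real.log (D (q ^ k) g) := min_le_right _ _
        _ ≤ _ := Real.log_le_log (by exact_mod_cast D_pos _ _ hpk0 hg) this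
end

section
/- Let L be a distributive lattice and w : L×L → [0,∞) an ultravaluation, i.e. w(f,g) = 0 whenever f ≤ g, and w(f,g) = max(w(f∧h, g), w(f, g∨h)) for all f,g,h. Then d_w(f,g) := max(w(f,g), w(g,f)) is a pseudo-ultrametric: it satisfies d_w(f,g) ≤ max(d_w(f,h), d_w(h,g)). -/
theorem ultravaluation_pseudo_ultrametric {L : Type*} [DistribLattice L]
    (w : L → L → ℝ) (hnn : ∀ f g : L, 0 ≤ w f g)
    (h1 : ∀ f g : L, f ≤ g → w f g = 0)
    (h2 : ∀ f g h : L, w f g = max (w (f ⊓ h) g) (w f (g ⊔ h))) :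
    (∀ f : L, max (w f f) (w f f) = 0) ∧
    (∀ f g : L, max (w f g) (w g f) = max (w g f) (w f g)) ∧
    (∀ f g h : L, max (w f g) (w g f) ≤
      max (max (w f h) (w h f)) (max (w h g) (w g h))) := by
  have mono1 : ∀ f f' g : L, f' ≤ f → w f' g ≤ w f g := by
    intro f f' g hff
    have := h2 f g f'
    rw [inf_eq_right.mpr hff] at this
    rw [this]; exact le_max_left _ _
  have mono2 : ∀ f g g' : L, g ≤ g' → w f g' ≤ w f g := by
    intro f g g' hgg
    have := h2 f g g'
    rw [sup_eq_right.mpr hgg] at this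
    rw [this]; exact le_max_right _ _
  have key : ∀ f g h : L, w f g ≤ max (w f h) (w h g) := by
    intro f g h
    rw [h2 f g h]
    exact max_le ((mono1 h (f ⊓ h) g inf_le_right).trans (le_max_right _ _))
      ((mono2 f h (g ⊔ h) le_sup_right).trans (le_max_left _ _))
  refine ⟨fun f => by simp [h1 f f le_rfl], fun f g => max_comm _ _, fun f g h => ?_⟩
  apply max_le
  · exact (key f g h).trans (max_le_max (le_max_left _ _) (le_max_left _ _))
  · calc w g f ≤ max (w g h) (w h f) := key g f h
      _ ≤ _ := max_le ((le_max_right _ _).trans (le_max_right _ _))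
        ((le_max_right _ _).trans (le_max_left _ _))
end

section
/- Let X be a finite set and L a lattice of subsets of X. Then every ultravaluation w on L is of the form w(A,B) = max({0} ∪ {κ(x) : x ∈ A \ B}) for some function κ : X → [0,∞); specifically one may take κ(x) = inf{w(C,D) : C,D ∈ L, x ∈ C, x ∉ D}. -/
theorem finite_ultravaluation_is_sup_kappa {X : Type*} [Fintype X]
    (L : Set (Set X))
    (hunion : ∀ A ∈ L, ∀ B ∈ L, A ∪ B ∈ L)
    (hinter : ∀ A ∈ L, ∀ B ∈ L, A ∩ B ∈ L)
    (w : Set X → Set X → ℝ) (hnn : ∀ A ∈ L, ∀ B ∈ L, 0 ≤ w A B)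
    (h1 : ∀ A ∈ L, ∀ B ∈ L, A ⊆ B → w A B = 0)
    (h2 : ∀ A ∈ L, ∀ B ∈ L, ∀ C ∈ L, w A B = max (w (A ∩ C) B) (w A (B ∪ C))) :
    ∀ A ∈ L, ∀ B ∈ L,
      w A B = sSup ({0} ∪
        (fun x => sInf {r : ℝ | ∃ C ∈ L, ∃ D ∈ L, x ∈ C ∧ x ∉ D ∧ w C D = r}) ''
          (A \ B)) := by
  classical
  intro A hA B hB
  set κ : X → ℝ := fun x => sInf {r : ℝ | ∃ C ∈ L, ∃ D ∈ L, x ∈ C ∧ x ∉ D ∧ w C D = r}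
    with hκ
  set S := sSup ({0} ∪ κ '' (A \ B)) with hSdef
  -- monotonicity lemmas
  have mono1 : ∀ A' ∈ L, ∀ B' ∈ L, ∀ C ∈ L, w (A' ∩ C) B' ≤ w A' B' := by
    intro A' hA' B' hB' C hC
    rw [h2 A' hA' B' hB' C hC]; exact le_max_left _ _
  have mono2 : ∀ A' ∈ L, ∀ B' ∈ L, ∀ C ∈ L, w A' (B' ∪ C) ≤ w A' B' := by
    intro A' hA' B' hB' C hC
    rw [h2 A' hA' B' hB' C hC]; exact le_max_right _ _
  have hfin : ({0} ∪ κ '' (A \ B) : Set ℝ).Finite :=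
    (Set.finite_singleton 0).union ((Set.toFinite (A \ B)).image κ)
  have hbdd : BddAbove ({0} ∪ κ '' (A \ B) : Set ℝ) := hfin.bddAbove
  have hne : ({0} ∪ κ '' (A \ B) : Set ℝ).Nonempty := ⟨0, Or.inl rfl⟩
  have hS0 : (0:ℝ) ≤ S := le_csSup hbdd (Or.inl rfl)
  -- upper bound direction : S ≤ w A B
  have hub : S ≤ w A B := by
    apply csSup_le hne
    rintro r (hr | ⟨x, hx, rfl⟩)
    · simp only [Set.mem_singleton_iff] at hr
      exact hr ▸ hnn A hA B hB
    · apply csInf_le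
      · refine ⟨0, ?_⟩
        rintro s ⟨C, hC, D, hD, -, -, rfl⟩
        exact hnn C hC D hD
      · exact ⟨A, hA, B, hB, hx.1, hx.2, rfl⟩
  -- lower bound direction : w A B ≤ S
  have hlb : w A B ≤ S := by
    refine le_of_forall_pos_le_add ?_
    intro ε hε
    have key : ∀ n : ℕ, ∀ A' ∈ L, ∀ B' ∈ L, A' \ B' ⊆ A \ B →
        (A' \ B').ncard ≤ n → w A' B' ≤ S + ε := by
      intro n
      induction n with
      | zero =>
        intro A' hA' B' hB' _ hcard
        have hempty : A' \ B' = ∅ := by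
          have hz : (A' \ B').ncard = 0 := by omega
          exact (Set.ncard_eq_zero (Set.toFinite _)).mp hz
        have hsub : A' ⊆ B' := Set.diff_eq_empty.mp hempty
        rw [h1 A' hA' B' hB' hsub]
        linarith
      | succ n ih =>
        intro A' hA' B' hB' hsubAB hcard
        by_cases hemp : A' \ B' = ∅
        · rw [h1 A' hA' B' hB' (Set.diff_eq_empty.mp hemp)]; linarith
        · obtain ⟨x, hx⟩ := Set.nonempty_iff_ne_empty.mpr hemp
          have hxAB : x ∈ A \ B := hsubAB hx
          have hκS : κ x ≤ S := le_csSup hbdd (Or.inr ⟨x, hxAB, rfl⟩)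
          -- pick C, D with w C D < κ x + ε
          have hsetne : {r : ℝ | ∃ C ∈ L, ∃ D ∈ L, x ∈ C ∧ x ∉ D ∧ w C D = r}.Nonempty :=
            ⟨w A B, A, hA, B, hB, hxAB.1, hxAB.2, rfl⟩
          obtain ⟨r, ⟨C, hC, D, hD, hxC, hxD, rfl⟩, hrlt⟩ :=
            Real.lt_sInf_add_pos hsetne hε
          have hwCD : w C D < S + ε := lt_of_lt_of_le hrlt (by linarith)
          -- cardinality helper
          have hsmall : ∀ s : Set X, s ⊆ A' \ B' → x ∉ s → s.ncard ≤ n := by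
            intro s hs hxs
            have h1' : s ⊆ (A' \ B') \ {x} := fun y hy =>
              ⟨hs hy, by simp; rintro rfl; exact hxs hy⟩
            have h2' : s.ncard ≤ ((A' \ B') \ {x}).ncard :=
              Set.ncard_le_ncard h1' (Set.toFinite _)
            have h3' : ((A' \ B') \ {x}).ncard < (A' \ B').ncard :=
              Set.ncard_diff_singleton_lt_of_mem hx (Set.toFinite _)
            omega
          rw [h2 A' hA' B' hB' C hC]
          apply max_le
          · -- w (A' ∩ C) B'
            have hA'C : A' ∩ C ∈ L := hinter A' hA' C hC
            rw [h2 (A' ∩ C) hA'C B' hB' D hD]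
            apply max_le
            · -- w (A' ∩ C ∩ D) B' : IH
              apply ih _ (hinter _ hA'C D hD) _ hB'
              · intro y hy
                exact hsubAB ⟨hy.1.1.1, hy.2⟩
              · apply hsmall
                · intro y hy; exact ⟨hy.1.1.1, hy.2⟩
                · intro hmem; exact hxD hmem.1.2
            · -- w (A' ∩ C) (B' ∪ D) ≤ w C D
              have e1 : w (A' ∩ C) (B' ∪ D) = w (C ∩ A') (D ∪ B') := by
                rw [Set.inter_comm, Set.union_comm]
              rw [e1]
              calc w (C ∩ A') (D ∪ B') ≤ w C (D ∪ B') :=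
                    mono1 C hC (D ∪ B') (hunion D hD B' hB') A' hA'
                _ ≤ w C D := mono2 C hC D hD B' hB'
                _ ≤ S + ε := le_of_lt hwCD
          · -- w A' (B' ∪ C) : IH
            apply ih _ hA' _ (hunion B' hB' C hC)
            · intro y hy
              exact hsubAB ⟨hy.1, fun hyB => hy.2 (Or.inl hyB)⟩
            · apply hsmall
              · intro y hy; exact ⟨hy.1, fun hyB => hy.2 (Or.inl hyB)⟩
              · intro hmem; exact hmem.2 (Or.inr hxC)
    linarith [key (A \ B).ncard A hA B hB (subset_refl _) (le_refl _)]
  linarith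
end

section
/- There exists a lattice L of subsets of a finite set with an ultravaluation metric d, and an element of L that is join-irreducible but not d-irreducible. Concretely, for X = {1,2,3}, κ = identity, and L = {∅, {2}, {3}, {2,3}, X} with d induced by w(A,B) = max({0} ∪ {x : x ∈ A\B}), the element X is join-irreducible in L but min(d(X,{2}), d(X,{3})) = 2 > 1 = d(X, {2,3}). -/
lemma wsup_eq (A B : Set ℕ) (v : ℝ)
    (hv : v ∈ ({0} ∪ (fun n : ℕ => (n : ℝ)) '' (A \ B)))
    (hub : ∀ x ∈ ({0} ∪ (fun n : ℕ => (n : ℝ)) '' (A \ B)), x ≤ v) :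
    sSup ({0} ∪ (fun n : ℕ => (n : ℝ)) '' (A \ B)) = v :=
  IsGreatest.csSup_eq ⟨hv, hub⟩

theorem joinIrreducible_not_dIrreducible_example :
    let L : Set (Set ℕ) := {∅, {2}, {3}, {2, 3}, {1, 2, 3}}
    let w : Set ℕ → Set ℕ → ℝ := fun A B => sSup ({0} ∪ (fun n : ℕ => (n : ℝ)) '' (A \ B))
    let d : Set ℕ → Set ℕ → ℝ := fun A B => max (w A B) (w B A)
    (∀ A ∈ L, ∀ B ∈ L, ({1, 2, 3} : Set ℕ) = A ∪ B →
      ({1, 2, 3} : Set ℕ) = A ∨ ({1, 2, 3} : Set ℕ) = B) ∧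
    min (d {1, 2, 3} {2}) (d {1, 2, 3} {3}) = 2 ∧
    d {1, 2, 3} {2, 3} = 1 := by
  intro L w d
  refine ⟨?_, ?_, ?_⟩
  · intro A hA B hB h
    have h1 : (1 : ℕ) ∈ A ∪ B := by rw [← h]; simp
    simp only [L, Set.mem_insert_iff, Set.mem_singleton_iff] at hA hB
    rcases hA with rfl | rfl | rfl | rfl | rfl <;>
      rcases hB with rfl | rfl | rfl | rfl | rfl <;> simp_all
  · have h1 : w {1, 2, 3} {2} = 3 := by
      apply wsup_eq
      · exact Or.inr ⟨3, by simp, by norm_num⟩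
      · rintro x (rfl | ⟨n, hn, rfl⟩)
        · norm_num
        · rcases hn.1 with rfl | rfl | rfl <;> norm_num
    have h2 : w {2} {1, 2, 3} = 0 := by
      apply wsup_eq
      · exact Or.inl rfl
      · rintro x (rfl | ⟨n, hn, rfl⟩)
        · norm_num
        · exact absurd hn (by simp; omega)
    have h3 : w {1, 2, 3} {3} = 2 := by
      apply wsup_eq
      · exact Or.inr ⟨2, by simp, by norm_num⟩
      · rintro x (rfl | ⟨n, hn, rfl⟩)
        · norm_num
        · rcases hn.1 with rfl | rfl | rfl
          · norm_num
          · norm_num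
          · exact absurd hn.2 (by simp)
    have h4 : w {3} {1, 2, 3} = 0 := by
      apply wsup_eq
      · exact Or.inl rfl
      · rintro x (rfl | ⟨n, hn, rfl⟩)
        · norm_num
        · exact absurd hn (by simp; omega)
    simp only [d, h1, h2, h3, h4]
    norm_num
  · have h1 : w {1, 2, 3} {2, 3} = 1 := by
      apply wsup_eq
      · exact Or.inr ⟨1, by simp, by norm_num⟩
      · rintro x (rfl | ⟨n, hn, rfl⟩)
        · norm_num
        · rcases hn.1 with rfl | rfl | rfl
          · norm_num
          · exact absurd hn.2 (by simp)
          · exact absurd hn.2 (by simp)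
    have h2 : w {2, 3} {1, 2, 3} = 0 := by
      apply wsup_eq
      · exact Or.inl rfl
      · rintro x (rfl | ⟨n, hn, rfl⟩)
        · norm_num
        · exact absurd hn (by simp; omega)
    simp only [d, h1, h2]
    norm_num
end

section
/- Let L be a distributive lattice with an intervaluation (w, ∘). Then: (1) w(f,g) = w(f∨g, g) = w(f, f∧g) = d_w(f∨g, g) for all f,g, where d_w(f,g) = w(f,g) ∘ w(g,f); (2) d_w is a pseudometric; (3) d_w is a metric if and only if w is positive (w(f,g)=0 ⇒ f ≤ g). -/
open NNReal in
theorem intervaluation_properties {L : Type*} [DistribLattice L]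
    (w : L → L → ℝ≥0) (op : ℝ≥0 → ℝ≥0 → ℝ≥0)
    (hcomm : ∀ r s, op r s = op s r)
    (hassoc : ∀ r s t, op (op r s) t = op r (op s t))
    (hzero : ∀ r, op r 0 = r)
    (hmono : ∀ r s t u : ℝ≥0, op r t ≤ op (r + s) (t + u) ∧
      op (r + s) (t + u) ≤ op r t + op s u)
    (hle : ∀ f g : L, f ≤ g → w f g = 0)
    (hcut : ∀ f g h : L, op (w f (g ⊔ h)) (w (f ⊓ h) g) ≤ w f g ∧
      w f g ≤ w f (g ⊔ h) + w (f ⊓ h) g) :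
    (∀ f g : L, w f g = w (f ⊔ g) g ∧ w f g = w f (f ⊓ g) ∧
      w f g = op (w (f ⊔ g) g) (w g (f ⊔ g))) ∧
    ((∀ f : L, op (w f f) (w f f) = 0) ∧
      (∀ f g : L, op (w f g) (w g f) = op (w g f) (w f g)) ∧
      (∀ f g h : L, op (w f g) (w g f) ≤
        op (w f h) (w h f) + op (w h g) (w g h))) ∧
    ((∀ f g : L, op (w f g) (w g f) = 0 → f = g) ↔
      (∀ f g : L, w f g = 0 → f ≤ g)) := by
  have hzl : ∀ r, op 0 r = r := fun r => (hcomm 0 r).trans (hzero r)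
  have opmono : ∀ r r' t t' : ℝ≥0, r ≤ r' → t ≤ t' → op r t ≤ op r' t' := by
    intro r r' t t' h1 h2
    obtain ⟨s, rfl⟩ := le_iff_exists_add.mp h1
    obtain ⟨u, rfl⟩ := le_iff_exists_add.mp h2
    exact (hmono r s t u).1
  -- (1a): w f g = w (f ⊔ g) g
  have hA : ∀ f g : L, w f g = w (f ⊔ g) g := by
    intro f g
    have c := hcut (f ⊔ g) g f
    have e1 : w (f ⊔ g) (g ⊔ f) = 0 := hle _ _ (by rw [sup_comm])
    have e2 : (f ⊔ g) ⊓ f = f := inf_eq_right.mpr le_sup_left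
    rw [e1, e2] at c
    refine le_antisymm ?_ ?_
    · calc w f g = op 0 (w f g) := (hzl _).symm
        _ ≤ w (f ⊔ g) g := c.1
    · calc w (f ⊔ g) g ≤ 0 + w f g := c.2
        _ = w f g := zero_add _
  -- (1b): w f g = w f (f ⊓ g)
  have hB : ∀ f g : L, w f g = w f (f ⊓ g) := by
    intro f g
    have c := hcut f (f ⊓ g) g
    have e1 : (f ⊓ g) ⊔ g = g := sup_eq_right.mpr inf_le_right
    have e2 : w (f ⊓ g) (f ⊓ g) = 0 := hle _ _ le_rfl
    rw [e1, e2] at c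
    refine le_antisymm ?_ ?_
    · calc w f g = op (w f g) 0 := (hzero _).symm
        _ ≤ w f (f ⊓ g) := c.1
    · calc w f (f ⊓ g) ≤ w f g + 0 := c.2
        _ = w f g := add_zero _
  -- monotonicity consequences
  have hjoin : ∀ f g h : L, w f (g ⊔ h) ≤ w f g := by
    intro f g h
    calc w f (g ⊔ h) = op (w f (g ⊔ h)) 0 := (hzero _).symm
      _ ≤ op (w f (g ⊔ h)) (w (f ⊓ h) g) := opmono _ _ _ _ le_rfl zero_le
      _ ≤ w f g := (hcut f g h).1
  have hmeet : ∀ f g h : L, w (f ⊓ h) g ≤ w f g := by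
    intro f g h
    calc w (f ⊓ h) g = op 0 (w (f ⊓ h) g) := (hzl _).symm
      _ ≤ op (w f (g ⊔ h)) (w (f ⊓ h) g) := opmono _ _ _ _ zero_le le_rfl
      _ ≤ w f g := (hcut f g h).1
  have wtri : ∀ f g h : L, w f g ≤ w f h + w h g := by
    intro f g h
    have h1 : w f (g ⊔ h) ≤ w f h := by rw [sup_comm]; exact hjoin f h g
    have h2 : w (f ⊓ h) g ≤ w h g := by rw [inf_comm]; exact hmeet h g f
    exact (hcut f g h).2.trans (add_le_add h1 h2)
  refine ⟨?_, ⟨?_, ?_, ?_⟩, ?_, ?_⟩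
  · intro f g
    refine ⟨hA f g, hB f g, ?_⟩
    rw [hle g (f ⊔ g) le_sup_right, hzero, hA]
  · intro f
    rw [hle f f le_rfl, hzero]
  · intro f g
    exact hcomm _ _
  · intro f g h
    calc op (w f g) (w g f)
        ≤ op (w f h + w h g) (w g h + w h f) :=
          opmono _ _ _ _ (wtri f g h) (wtri g f h)
      _ = op (w f h + w h g) (w h f + w g h) := by rw [add_comm (w g h)]
      _ ≤ op (w f h) (w h f) + op (w h g) (w g h) := (hmono _ _ _ _).2
  · intro hm f g h0
    have : f = f ⊓ g := by
      apply hm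
      rw [← hB f g, h0, hle (f ⊓ g) f inf_le_left, hzero]
    exact this.trans_le inf_le_right
  · intro hp f g h0
    have h1 : w f g = 0 := by
      refine le_antisymm ?_ zero_le
      calc w f g = op (w f g) 0 := (hzero _).symm
        _ ≤ op (w f g) (w g f) := opmono _ _ _ _ le_rfl zero_le
        _ = 0 := h0
    have h2 : w g f = 0 := by
      refine le_antisymm ?_ zero_le
      calc w g f = op 0 (w g f) := (hzl _).symm
        _ ≤ op (w f g) (w g f) := opmono _ _ _ _ zero_le le_rfl
        _ = 0 := h0
    exact le_antisymm (hp f g h1) (hp g f h2)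
end
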